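/- Let K be a finite simplicial complex which is d-Matoušek, and let W be a subset of the vertices of K with induced subcomplex L = {F ∈ K : F ⊆ W}. Then L is d-Matoušek. The key fact is that every facet of L is of the form W ∩ J for some facet J of K, and choosing such a J for each facet of L induces a simplicial map L' → K' which, applied coordinatewise, sends Ĥ(L) into Ĥ(K) equivariantly. -/

import Mathlib

open scoped BigOperators

noncomputable section

variable {V : Type*} [Fintype V] [DecidableEq V]

def IsComplex (K : Finset (Finset V)) : Prop :=
  ∅ ∈ K ∧ (∀ v : V, {v} ∈ K) ∧ ∀ F ∈ K, ∀ G ⊆ F, G ∈ K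

def facets (K : Finset (Finset V)) : Finset (Finset V) :=
  K.filter fun J => ∀ J' ∈ K, J ⊆ J' → J = J'

def contV (K : Finset (Finset V)) (i : V) : Finset (Finset V) :=
  (facets K).filter fun J => i ∈ J

def dual (K : Finset (Finset V)) : Finset (Finset (Finset V)) :=
  (facets K).powerset.filter fun α => (α.inf id).Nonempty

def geomFace {W : Type*} [Fintype W] (F : Finset W) : Set (W → ℝ) :=
  {x | (∀ w, 0 ≤ x w) ∧ (∑ w, x w) = 1 ∧ ∀ w, x w ≠ 0 → w ∈ F}

def geom {W : Type*} [Fintype W] (L : Finset (Finset W)) : Set (W → ℝ) :=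
  ⋃ F ∈ L, geomFace F

def supp {W : Type*} [Fintype W] [DecidableEq W] (x : W → ℝ) : Finset W :=
  Finset.univ.filter fun w => x w ≠ 0

def Faithful {d : ℕ} (K : Finset (Finset V))
    (f : (Finset V → ℝ) → EuclideanSpace ℝ (Fin d)) : Prop :=
  ∀ I : Finset V, (⋂ i ∈ I, f '' geomFace (contV K i)).Nonempty → I ∈ K

def affExt {W : Type*} [Fintype W] {E : Type*} [AddCommGroup E] [Module ℝ E]
    (p : W → E) (x : W → ℝ) : E := ∑ w, x w • p w

def Hhat (K : Finset (Finset V)) : Set ((Finset V → ℝ) × (Finset V → ℝ)) :=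
  {z | z.1 ∈ geom (dual K) ∧ z.2 ∈ geom (dual K) ∧
    ((supp z.1).inf id ∪ (supp z.2).inf id) ∉ K}

def Matousek (d : ℕ) (K : Finset (Finset V)) : Prop :=
  ∃ g : Hhat K → EuclideanSpace ℝ (Fin d),
    Continuous g ∧ (∀ z, ‖g z‖ = 1) ∧
    ∀ (x y : Finset V → ℝ) (hxy : (x, y) ∈ Hhat K) (hyx : (y, x) ∈ Hhat K),
      g ⟨(y, x), hyx⟩ = - g ⟨(x, y), hxy⟩

def Representable (d : ℕ) (K : Finset (Finset V)) : Prop :=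
  ∃ C : V → Set (EuclideanSpace ℝ (Fin d)),
    (∀ i, Convex ℝ (C i)) ∧ ∀ I : Finset V, I ∈ K ↔ (⋂ i ∈ I, C i).Nonempty

def dimOf {W : Type*} [Fintype W] [DecidableEq W] (L : Finset (Finset W)) : ℕ :=
  (L.sup Finset.card) - 1

/-!
Choose for every face `F` of `K` a facet `φ F ⊇ F` and push weights on facets forward along `φ`.
A point of `|L'|` supported on facets with a common vertex goes to a point of `|K'|` whose
supporting facets still share that vertex, and the intersection of the supporting facets can only
grow. For `(x, y) ∈ Ĥ(L)` the union of the two intersections lies in `W`, so if the enlarged union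
were a face of `K`, the original one would be a face of `L` by downward closure. Hence the
pushforward maps `Ĥ(L)` continuously and equivariantly into `Ĥ(K)`, and composing with the test
map of `K` gives one for `L`.
-/

lemma exists_facet_superset (K : Finset (Finset V)) {F : Finset V} (hF : F ∈ K) :
    ∃ J ∈ facets K, F ⊆ J := by
  obtain ⟨J, hJ, hmax⟩ := (K.filter (F ⊆ ·)).exists_max_image Finset.card ⟨F, by simp [hF]⟩
  rw [Finset.mem_filter] at hJ
  refine ⟨J, Finset.mem_filter.mpr ⟨hJ.1, fun J' hJ' hJJ' => ?_⟩, hJ.2⟩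
  exact Finset.eq_of_subset_of_card_le hJJ' (hmax J' (by simp [hJ', hJ.2.trans hJJ']))

lemma exists_facet_selection (K : Finset (Finset V)) :
    ∃ φ : Finset V → Finset V, (∀ F, F ⊆ φ F) ∧ ∀ F ∈ K, φ F ∈ facets K := by
  have : ∀ F : Finset V, ∃ J, F ⊆ J ∧ (F ∈ K → J ∈ facets K) := fun F =>
    if hF : F ∈ K then
      let ⟨J, hJ, hFJ⟩ := exists_facet_superset K hF
      ⟨J, hFJ, fun _ => hJ⟩
    else ⟨F, subset_rfl, fun h => absurd h hF⟩
  choose φ hφ using this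
  exact ⟨φ, fun F => (hφ F).1, fun F => (hφ F).2⟩

section Pushforward

variable {α β : Type*} [Fintype α] [DecidableEq β]

def pushforward (φ : α → β) (x : α → ℝ) : β → ℝ :=
  fun b => ∑ a ∈ Finset.univ.filter (φ · = b), x a

lemma continuous_pushforward (φ : α → β) : Continuous (pushforward φ) :=
  continuous_pi fun _ => continuous_finsetSum _ fun a _ => continuous_apply a

lemma sum_pushforward [Fintype β] (φ : α → β) (x : α → ℝ) :
    ∑ b, pushforward φ x b = ∑ a, x a :=
  Finset.sum_fiberwise _ φ x

lemma supp_pushforward_subset [DecidableEq α] [Fintype β] (φ : α → β) (x : α → ℝ) :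
    supp (pushforward φ x) ⊆ (supp x).image φ := by
  intro b hb
  obtain ⟨a, ha, hxa⟩ := Finset.exists_ne_zero_of_sum_ne_zero (Finset.mem_filter.mp hb).2
  exact Finset.mem_image.mpr ⟨a, by simpa [supp] using hxa, (Finset.mem_filter.mp ha).2⟩

lemma supp_subset_of_mem_geomFace [DecidableEq α] {s : Finset α} {x : α → ℝ}
    (hx : x ∈ geomFace s) : supp x ⊆ s :=
  fun a ha => hx.2.2 a (Finset.mem_filter.mp ha).2

lemma supp_nonempty_of_mem_geomFace [DecidableEq α] {s : Finset α} {x : α → ℝ}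
    (hx : x ∈ geomFace s) : (supp x).Nonempty := by
  obtain ⟨a, -, ha⟩ := Finset.exists_ne_zero_of_sum_ne_zero (hx.2.1.symm ▸ one_ne_zero)
  exact ⟨a, by simpa [supp] using ha⟩

lemma pushforward_mem_geomFace [DecidableEq α] [Fintype β] (φ : α → β) {s : Finset α}
    {x : α → ℝ} (hx : x ∈ geomFace s) : pushforward φ x ∈ geomFace (s.image φ) := by
  refine ⟨fun b => Finset.sum_nonneg fun a _ => hx.1 a, (sum_pushforward φ x).trans hx.2.1,
    fun b hb => ?_⟩
  have hb : b ∈ supp (pushforward φ x) := by simpa [supp] using hb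
  exact Finset.image_subset_image (supp_subset_of_mem_geomFace hx) (supp_pushforward_subset φ x hb)

lemma inf_le_inf_image {γ : Type*} [SemilatticeInf γ] [OrderTop γ] [DecidableEq γ]
    {φ : γ → γ} (hφ : ∀ c, c ≤ φ c) (s : Finset γ) : s.inf id ≤ (s.image φ).inf id := by
  rw [Finset.inf_image]
  exact Finset.inf_mono_fun fun c _ => hφ c

lemma inf_supp_le_inf_supp_pushforward [DecidableEq α] [SemilatticeInf α] [OrderTop α]
    {φ : α → α} (hφ : ∀ a, a ≤ φ a) (x : α → ℝ) :
    (supp x).inf id ≤ (supp (pushforward φ x)).inf id :=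
  (inf_le_inf_image hφ _).trans (Finset.inf_mono (supp_pushforward_subset φ x))

end Pushforward

section FacetSelection

variable {K L : Finset (Finset V)} {φ : Finset V → Finset V}

lemma pushforward_mem_geom_dual (hLK : L ⊆ K) (hφ : ∀ F, F ⊆ φ F)
    (hφK : ∀ F ∈ K, φ F ∈ facets K) {x : Finset V → ℝ} (hx : x ∈ geom (dual L)) :
    pushforward φ x ∈ geom (dual K) := by
  simp only [geom, Set.mem_iUnion] at hx ⊢
  obtain ⟨A, hA, hxA⟩ := hx
  rw [dual, Finset.mem_filter, Finset.mem_powerset] at hA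
  refine ⟨A.image φ, ?_, pushforward_mem_geomFace φ hxA⟩
  rw [dual, Finset.mem_filter, Finset.mem_powerset, Finset.image_subset_iff]
  exact ⟨fun F hF => hφK F (hLK (Finset.filter_subset _ _ (hA.1 hF))),
    hA.2.mono (inf_le_inf_image hφ A)⟩

lemma inf_supp_subset_of_mem_geom_dual {W : Finset V} (hLW : ∀ F ∈ L, F ⊆ W)
    {x : Finset V → ℝ} (hx : x ∈ geom (dual L)) : (supp x).inf id ⊆ W := by
  simp only [geom, Set.mem_iUnion] at hx
  obtain ⟨A, hA, hxA⟩ := hx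
  obtain ⟨F, hF⟩ := supp_nonempty_of_mem_geomFace hxA
  have hFA : F ∈ A := supp_subset_of_mem_geomFace hxA hF
  have hFL : F ∈ L :=
    Finset.filter_subset _ _ (Finset.mem_powerset.mp (Finset.mem_filter.mp hA).1 hFA)
  exact (Finset.inf_le (f := id) hF).trans (hLW F hFL)

lemma pushforward_mem_Hhat (hK : ∀ F ∈ K, ∀ G ⊆ F, G ∈ K) (hφ : ∀ F, F ⊆ φ F)
    (hφK : ∀ F ∈ K, φ F ∈ facets K) (W : Finset V) {z : (Finset V → ℝ) × (Finset V → ℝ)}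
    (hz : z ∈ Hhat (K.filter (· ⊆ W))) :
    (pushforward φ z.1, pushforward φ z.2) ∈ Hhat K := by
  obtain ⟨hx, hy, hxy⟩ := hz
  have hLK : K.filter (· ⊆ W) ⊆ K := Finset.filter_subset _ _
  have hLW : ∀ F ∈ K.filter (· ⊆ W), F ⊆ W := fun F hF => (Finset.mem_filter.mp hF).2
  refine ⟨pushforward_mem_geom_dual hLK hφ hφK hx, pushforward_mem_geom_dual hLK hφ hφK hy,
    fun hunion => hxy (Finset.mem_filter.mpr ⟨hK _ hunion _ ?_, ?_⟩)⟩
  · exact Finset.union_subset_union (inf_supp_le_inf_supp_pushforward hφ z.1)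
      (inf_supp_le_inf_supp_pushforward hφ z.2)
  · exact Finset.union_subset (inf_supp_subset_of_mem_geom_dual hLW hx)
      (inf_supp_subset_of_mem_geom_dual hLW hy)

end FacetSelection

lemma Matousek.of_continuous_mapsTo {V' : Type*} [Fintype V'] [DecidableEq V'] {d : ℕ}
    {K : Finset (Finset V)} {L : Finset (Finset V')} (hK : Matousek d K)
    {Φ : (Finset V' → ℝ) → (Finset V → ℝ)} (hΦ : Continuous Φ)
    (hmaps : ∀ z ∈ Hhat L, (Φ z.1, Φ z.2) ∈ Hhat K) : Matousek d L := by
  obtain ⟨g, hgc, hgn, hga⟩ := hK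
  refine ⟨fun z => g ⟨(Φ z.1.1, Φ z.1.2), hmaps z z.2⟩, ?_, fun z => hgn _,
    fun x y hxy hyx => hga _ _ (hmaps (x, y) hxy) (hmaps (y, x) hyx)⟩
  exact hgc.comp (by fun_prop)

/-- induced subcomplexes of `d`-Matoušek complexes are
`d`-Matoušek. -/
theorem stmt17 {d : ℕ} (K : Finset (Finset V)) (hK : IsComplex K)
    (hM : Matousek d K) (W : Finset V) :
    Matousek d (K.filter fun F => F ⊆ W) := by
  obtain ⟨φ, hφ, hφK⟩ := exists_facet_selection K
  exact hM.of_continuous_mapsTo (continuous_pushforward φ)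
    fun _ hz => pushforward_mem_Hhat hK.2.2 hφ hφK W hz
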